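/- arXiv:2005.03160 — 2 statements merged into one kernel-verified Lean document; each statement's English description precedes it below -/
import Mathlib

section
/- Let $V$ be a real vector space, $D : V \to V$ linear, $k \in \mathbb{N}_0$, and set $c(j) = j$ for $j$ even, $c(j) = -2k + j - 1$ for $j$ odd. Suppose $(F_j)_{j \geq 0}$ in $V$ satisfies $c(j+1) F_{j+1} = (-1)^{j+1} D F_j$ for all $j \geq 0$. Then: (a) $D F_{2k} = 0$, equivalently $D^{2k+1} F_0 = 0$; (b) $F_{2j} = \frac{(k-j)!}{2^{2j} j!\, k!} D^{2j} F_0$ for $0 \leq j \leq k$ and $F_{2j+1} = \frac{(k-j-1)!}{2^{2j+1} j!\, k!} D^{2j+1} F_0$ for $0 \leq j \leq k-1$; (c) $F_{2k+2j+1} = \frac{(-1)^j k!}{2^{2j} j! (k+j)!} D^{2j} F_{2k+1}$ and $F_{2k+2j+2} = \frac{(-1)^j k!}{2^{2j+1} j! (k+j+1)!} D^{2j+1} F_{2k+1}$ for all $j \geq 0$. In particular, all $F_j$ are determined by the two elements $F_0$ and $F_{2k+1}$. -/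
/-!
Away from `n = 2k` the coefficient `c (n + 1)` is nonzero, so the recurrence solves to
`F (n + 1) = a n • D (F n)` with `a n = (-1) ^ (n + 1) / c (n + 1)`. Iterating gives
`F n = (∏ i < n, a i) • D ^ n (F 0)` for `n ≤ 2k` and
`F (2k + 1 + n) = (∏ i < n, a (2k + 1 + i)) • D ^ n (F (2k + 1))`, and the products telescope to
the factorial quotients. At `n = 2k` the recurrence degenerates to `0 = -D (F (2k))`; as the
coefficient of `D ^ (2k) (F 0)` in `F (2k)` is nonzero, this forces `D ^ (2k + 1) (F 0) = 0`.
-/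

open Finset
open scoped Nat

theorem Module.End.eq_prod_smul_pow_apply {R V : Type*} [CommSemiring R] [AddCommMonoid V]
    [Module R V] (D : Module.End R V) (a : ℕ → R) (F : ℕ → V) (n : ℕ)
    (hF : ∀ i < n, F (i + 1) = a i • D (F i)) :
    F n = (∏ i ∈ range n, a i) • (D ^ n) (F 0) := by
  induction n with
  | zero => simp
  | succ n ih =>
    rw [hF n n.lt_succ_self, ih fun i hi => hF i (hi.trans n.lt_succ_self), map_smul,
      smul_smul, prod_range_succ, mul_comm, pow_succ', Module.End.mul_apply]

namespace CKRecurrence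

noncomputable def stepCoeff (c : ℕ → ℝ) (n : ℕ) : ℝ := (-1) ^ (n + 1) / c (n + 1)

theorem succ_eq_stepCoeff_smul {V : Type*} [AddCommGroup V] [Module ℝ V]
    {D : Module.End ℝ V} {c : ℕ → ℝ} {F : ℕ → V}
    (hF : ∀ j : ℕ, c (j + 1) • F (j + 1) = ((-1 : ℝ) ^ (j + 1)) • D (F j)) {n : ℕ}
    (hc : c (n + 1) ≠ 0) : F (n + 1) = stepCoeff c n • D (F n) := by
  rw [stepCoeff, div_eq_inv_mul, mul_smul, ← hF n, inv_smul_smul₀ hc]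

section

variable {k : ℕ} {c : ℕ → ℝ}

theorem c_two_mul_add_one (hc_odd : ∀ j : ℕ, Odd j → c j = -(2 * k : ℝ) + (j : ℝ) - 1)
    (m : ℕ) : c (2 * m + 1) = 2 * ((m : ℝ) - k) := by
  rw [hc_odd _ (odd_two_mul_add_one m)]
  push_cast
  ring

theorem c_two_mul_add_two (hc_even : ∀ j : ℕ, Even j → c j = (j : ℝ)) (m : ℕ) :
    c (2 * m + 2) = 2 * ((m : ℝ) + 1) := by
  rw [hc_even _ ⟨m + 1, by ring⟩]
  push_cast
  ring

theorem c_succ_ne_zero (hc_even : ∀ j : ℕ, Even j → c j = (j : ℝ))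
    (hc_odd : ∀ j : ℕ, Odd j → c j = -(2 * k : ℝ) + (j : ℝ) - 1)
    {n : ℕ} (hn : n ≠ 2 * k) :
    c (n + 1) ≠ 0 := by
  obtain ⟨m, rfl | rfl⟩ := n.even_or_odd'
  · rw [c_two_mul_add_one hc_odd]
    have hmk : (m : ℝ) ≠ k := by exact_mod_cast (show m ≠ k by omega)
    exact mul_ne_zero two_ne_zero (sub_ne_zero.2 hmk)
  · rw [c_two_mul_add_two hc_even]
    positivity

/-- At `m = k` both sides are `0`, by the convention `x / 0 = 0`. -/
theorem stepCoeff_two_mul (hc_odd : ∀ j : ℕ, Odd j → c j = -(2 * k : ℝ) + (j : ℝ) - 1)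
    (m : ℕ) : stepCoeff c (2 * m) = (2 * ((k : ℝ) - m))⁻¹ := by
  rw [stepCoeff, c_two_mul_add_one hc_odd, (odd_two_mul_add_one m).neg_one_pow, neg_div,
    ← div_neg, one_div, neg_mul_eq_mul_neg, neg_sub]

theorem stepCoeff_two_mul_add_one (hc_even : ∀ j : ℕ, Even j → c j = (j : ℝ)) (m : ℕ) :
    stepCoeff c (2 * m + 1) = (2 * ((m : ℝ) + 1))⁻¹ := by
  rw [stepCoeff, c_two_mul_add_two hc_even, Even.neg_one_pow ⟨m + 1, by ring⟩, one_div]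

theorem prod_stepCoeff_two_mul (hc_even : ∀ j : ℕ, Even j → c j = (j : ℝ))
    (hc_odd : ∀ j : ℕ, Odd j → c j = -(2 * k : ℝ) + (j : ℝ) - 1)
    {j : ℕ} (hj : j ≤ k) :
    ∏ i ∈ range (2 * j), stepCoeff c i
      = (k - j)! / (2 ^ (2 * j) * j ! * k !) := by
  induction j with
  | zero => simp [(Nat.cast_pos.2 k.factorial_pos).ne']
  | succ j ih =>
    have hjk : ((k - j : ℕ) : ℝ) = k - j := Nat.cast_sub (by omega)
    have hfac : ((k - j)! : ℝ) = (k - j) * (k - (j + 1))! := by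
      rw [← hjk, ← Nat.cast_mul, ← Nat.mul_factorial_pred (by omega), Nat.sub_sub]
    rw [show 2 * (j + 1) = 2 * j + 1 + 1 by ring, prod_range_succ, prod_range_succ,
      ih (by omega), stepCoeff_two_mul hc_odd, stepCoeff_two_mul_add_one hc_even, hfac,
      Nat.factorial_succ]
    have hkj : (k : ℝ) - j ≠ 0 := sub_ne_zero.2 (by exact_mod_cast (show k ≠ j by omega))
    push_cast
    field_simp
    ring

theorem prod_stepCoeff_two_mul_add_one (hc_even : ∀ j : ℕ, Even j → c j = (j : ℝ))
    (hc_odd : ∀ j : ℕ, Odd j → c j = -(2 * k : ℝ) + (j : ℝ) - 1)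
    {j : ℕ} (hj : j + 1 ≤ k) :
    ∏ i ∈ range (2 * j + 1), stepCoeff c i
      = (k - j - 1)! / (2 ^ (2 * j + 1) * j ! * k !) := by
  have hjk : ((k - j : ℕ) : ℝ) = k - j := Nat.cast_sub (by omega)
  have hfac : ((k - j)! : ℝ) = (k - j) * (k - j - 1)! := by
    rw [← hjk, ← Nat.cast_mul, Nat.mul_factorial_pred (by omega)]
  rw [prod_range_succ, prod_stepCoeff_two_mul hc_even hc_odd (by omega),
    stepCoeff_two_mul hc_odd, hfac]
  have hkj : (k : ℝ) - j ≠ 0 := sub_ne_zero.2 (by exact_mod_cast (show k ≠ j by omega))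
  field_simp
  ring

theorem prod_stepCoeff_tail_two_mul (hc_even : ∀ j : ℕ, Even j → c j = (j : ℝ))
    (hc_odd : ∀ j : ℕ, Odd j → c j = -(2 * k : ℝ) + (j : ℝ) - 1) (j : ℕ) :
    ∏ i ∈ range (2 * j), stepCoeff c (2 * k + 1 + i)
      = (-1) ^ j * k ! / (2 ^ (2 * j) * j ! * (k + j)!) := by
  induction j with
  | zero => simp [(Nat.cast_pos.2 k.factorial_pos).ne']
  | succ j ih =>
    rw [show 2 * (j + 1) = 2 * j + 1 + 1 by ring, prod_range_succ, prod_range_succ, ih,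
      show 2 * k + 1 + 2 * j = 2 * (k + j) + 1 by ring, stepCoeff_two_mul_add_one hc_even,
      show 2 * k + 1 + (2 * j + 1) = 2 * (k + j + 1) by ring, stepCoeff_two_mul hc_odd,
      ← add_assoc, Nat.factorial_succ j, Nat.factorial_succ (k + j), Nat.cast_add_one,
      Nat.cast_add, show (k : ℝ) - (k + j + 1) = -(j + 1) by ring]
    push_cast
    field_simp
    ring

theorem prod_stepCoeff_tail_two_mul_add_one (hc_even : ∀ j : ℕ, Even j → c j = (j : ℝ))
    (hc_odd : ∀ j : ℕ, Odd j → c j = -(2 * k : ℝ) + (j : ℝ) - 1) (j : ℕ) :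
    ∏ i ∈ range (2 * j + 1), stepCoeff c (2 * k + 1 + i)
      = (-1) ^ j * k ! / (2 ^ (2 * j + 1) * j ! * (k + j + 1)!) := by
  rw [prod_range_succ, prod_stepCoeff_tail_two_mul hc_even hc_odd,
    show 2 * k + 1 + 2 * j = 2 * (k + j) + 1 by ring, stepCoeff_two_mul_add_one hc_even,
    Nat.factorial_succ (k + j)]
  push_cast
  field_simp
  ring

end

end CKRecurrence

open CKRecurrence

/-- Abstract CK-recurrence in superdimension `M = -2k`: if
`c(j+1) F_{j+1} = (-1)^{j+1} D F_j` with `c(j) = j` for even `j` and `c(j) = -2k+j-1`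
for odd `j`, then `D F_{2k} = 0` (equivalently `D^{2k+1} F₀ = 0`) and all `F_j` are
determined by the two elements `F₀` and `F_{2k+1}`. -/
theorem CK_recurrence_neg_even (V : Type*) [AddCommGroup V] [Module ℝ V]
    (D : Module.End ℝ V) (k : ℕ)
    (c : ℕ → ℝ)
    (hc_even : ∀ j : ℕ, Even j → c j = (j : ℝ))
    (hc_odd : ∀ j : ℕ, Odd j → c j = -(2 * k : ℝ) + (j : ℝ) - 1)
    (F : ℕ → V)
    (hF : ∀ j : ℕ, c (j + 1) • F (j + 1) = ((-1 : ℝ) ^ (j + 1)) • D (F j)) :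
    D (F (2 * k)) = 0 ∧
    (D ^ (2 * k + 1)) (F 0) = 0 ∧
    (∀ j : ℕ, j ≤ k →
      F (2 * j) = ((Nat.factorial (k - j) : ℝ)
          / (2 ^ (2 * j) * (Nat.factorial j : ℝ) * (Nat.factorial k : ℝ))) •
        (D ^ (2 * j)) (F 0)) ∧
    (∀ j : ℕ, j + 1 ≤ k →
      F (2 * j + 1) = ((Nat.factorial (k - j - 1) : ℝ)
          / (2 ^ (2 * j + 1) * (Nat.factorial j : ℝ) * (Nat.factorial k : ℝ))) •
        (D ^ (2 * j + 1)) (F 0)) ∧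
    (∀ j : ℕ,
      F (2 * k + 2 * j + 1) = (((-1 : ℝ) ^ j * (Nat.factorial k : ℝ))
          / (2 ^ (2 * j) * (Nat.factorial j : ℝ) * (Nat.factorial (k + j) : ℝ))) •
        (D ^ (2 * j)) (F (2 * k + 1))) ∧
    (∀ j : ℕ,
      F (2 * k + 2 * j + 2) = (((-1 : ℝ) ^ j * (Nat.factorial k : ℝ))
          / (2 ^ (2 * j + 1) * (Nat.factorial j : ℝ) * (Nat.factorial (k + j + 1) : ℝ))) •
        (D ^ (2 * j + 1)) (F (2 * k + 1))) := by
  have hstep (n : ℕ) (hn : n ≠ 2 * k) : F (n + 1) = stepCoeff c n • D (F n) :=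
    succ_eq_stepCoeff_smul hF (c_succ_ne_zero hc_even hc_odd hn)
  have head (n : ℕ) (hn : n ≤ 2 * k) :
      F n = (∏ i ∈ range n, stepCoeff c i) • (D ^ n) (F 0) :=
    D.eq_prod_smul_pow_apply _ F n fun i hi => hstep i (hi.trans_le hn).ne
  have tail (n : ℕ) :
      F (2 * k + 1 + n)
        = (∏ i ∈ range n, stepCoeff c (2 * k + 1 + i)) • (D ^ n) (F (2 * k + 1)) :=
    D.eq_prod_smul_pow_apply _ (fun i => F (2 * k + 1 + i)) n
      fun i _ => hstep (2 * k + 1 + i) (by omega)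
  have heven (j : ℕ) (hj : j ≤ k) :
      F (2 * j) = ((k - j)! / (2 ^ (2 * j) * j ! * k ! : ℝ)) • (D ^ (2 * j)) (F 0) := by
    rw [head (2 * j) (by omega), prod_stepCoeff_two_mul hc_even hc_odd hj]
  have hDF : D (F (2 * k)) = 0 := by
    simpa [c_two_mul_add_one hc_odd k, (odd_two_mul_add_one k).neg_one_pow] using (hF (2 * k)).symm
  refine ⟨hDF, ?_, heven, fun j hj => ?_, fun j => ?_, fun j => ?_⟩
  · have hcoeff : ((k - k)! / (2 ^ (2 * k) * k ! * k ! : ℝ)) ≠ 0 := by positivity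
    rw [pow_succ', Module.End.mul_apply, ← inv_smul_smul₀ hcoeff ((D ^ (2 * k)) (F 0)),
      ← heven k le_rfl, map_smul, hDF, smul_zero]
  · rw [head (2 * j + 1) (by omega), prod_stepCoeff_two_mul_add_one hc_even hc_odd hj]
  · rw [show 2 * k + 2 * j + 1 = 2 * k + 1 + 2 * j by ring, tail,
      prod_stepCoeff_tail_two_mul hc_even hc_odd]
  · rw [show 2 * k + 2 * j + 2 = 2 * k + 1 + (2 * j + 1) by ring, tail,
      prod_stepCoeff_tail_two_mul_add_one hc_even hc_odd]
end

section
/- Let $R : \mathbb{R}^m \to \mathbb{R}$ be a homogeneous polynomial of degree $2j$, and let $\Delta$ be the Laplacian on $\mathbb{R}^m$. Then for all nonnegative integers $\ell$, $\Delta^{j+\ell}\left[ |x|^{2\ell} R(x) \right] = 4^{\ell}\, \frac{(j+\ell)!}{j!}\, \frac{\Gamma\left(j + \ell + \frac{m}{2}\right)}{\Gamma\left(j + \frac{m}{2}\right)}\; \Delta^{j}[R](x)$ as an identity of polynomials (note $\Delta^j R$ is a constant). -/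
/-!
Write `r² = ∑ xᵢ²`. For `p` homogeneous of degree `n`, the Leibniz rule and Euler's identity
`∑ xᵢ ∂ᵢ p = n p` give `Δ (r² p) = r² Δp + (4n + 2m) p`. For `p` of degree `2j`, induction on `j`
(`Δp` has degree `2j - 2`, and constants are harmonic) turns this into
`Δ^{j+1} (r² p) = (2j+2)(2j+m) Δ^j p`. Applying that to `r^{2(ℓ-1)} R`, of degree `2(j+ℓ-1)`, and
so on down, gives `Δ^{j+ℓ} (r^{2ℓ} R) = ∏_{i<ℓ} (2(j+i)+2)(2(j+i)+m) Δ^j R`, and this product is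
`4^ℓ (j+1)_ℓ (j+m/2)_ℓ`. Everything happens in the polynomial ring: the analytic Laplacian of a
polynomial function is the evaluation of the formal one.
-/

open Finset

namespace MvPolynomial

section Laplacian

variable (σ R : Type*) [Fintype σ] [CommSemiring R]

noncomputable def laplacian : MvPolynomial σ R →ₗ[R] MvPolynomial σ R :=
  ∑ i, (pderiv i).toLinearMap ∘ₗ (pderiv i).toLinearMap

variable {σ R}

theorem laplacian_apply (p : MvPolynomial σ R) :
    laplacian σ R p = ∑ i, pderiv i (pderiv i p) := by
  simp [laplacian]

theorem laplacian_C (a : R) : laplacian σ R (C a) = 0 := by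
  simp [laplacian_apply]

theorem IsHomogeneous.laplacian {p : MvPolynomial σ R} {n : ℕ} (hp : p.IsHomogeneous (n + 2)) :
    (laplacian σ R p).IsHomogeneous n := by
  rw [laplacian_apply]
  exact IsHomogeneous.sum _ _ _ fun i _ => hp.pderiv.pderiv

theorem pderiv_sum_X_sq (i : σ) : pderiv i (∑ k, X k ^ 2 : MvPolynomial σ R) = 2 • X i := by
  classical
  simp [pderiv_X, Pi.single_apply]

theorem isHomogeneous_sum_X_sq : (∑ k, X k ^ 2 : MvPolynomial σ R).IsHomogeneous 2 :=
  IsHomogeneous.sum _ _ _ fun k _ => isHomogeneous_X_pow k 2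

theorem laplacian_sum_X_sq_mul {p : MvPolynomial σ R} {n : ℕ} (hp : p.IsHomogeneous n) :
    laplacian σ R ((∑ k, X k ^ 2) * p)
      = (∑ k, X k ^ 2) * laplacian σ R p + (4 * n + 2 * Fintype.card σ) • p := by
  have hsecond (i : σ) : pderiv i (pderiv i ((∑ k, X k ^ 2) * p))
      = (∑ k, X k ^ 2) * pderiv i (pderiv i p) + 4 • (X i * pderiv i p) + 2 • p := by
    simp only [Derivation.leibniz, pderiv_sum_X_sq, smul_eq_mul, map_add, map_nsmul, pderiv_X_self]
    ring
  simp only [laplacian_apply, hsecond, sum_add_distrib, ← mul_sum, ← smul_sum,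
    hp.sum_X_mul_pderiv, sum_const, card_univ]
  module

theorem iterate_laplacian_sum_X_sq_mul {j : ℕ} {p : MvPolynomial σ R}
    (hp : p.IsHomogeneous (2 * j)) :
    (laplacian σ R)^[j + 1] ((∑ k, X k ^ 2) * p)
      = ((2 * j + 2) * (2 * j + Fintype.card σ)) • (laplacian σ R)^[j] p := by
  induction j generalizing p with
  | zero =>
    have hC : p = C (p.coeff 0) :=
      totalDegree_eq_zero_iff_eq_C.mp ((totalDegree_zero_iff_isHomogeneous σ).mpr hp)
    rw [Function.iterate_one, laplacian_sum_X_sq_mul hp, hC, laplacian_C]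
    simp
  | succ j ih =>
    rw [Function.iterate_succ_apply, laplacian_sum_X_sq_mul hp, iterate_map_add,
      iterate_map_nsmul, ih hp.laplacian, ← Function.iterate_succ_apply, ← add_smul]
    congr 1
    ring

theorem iterate_laplacian_sum_X_sq_pow_mul {j : ℕ} {p : MvPolynomial σ R}
    (hp : p.IsHomogeneous (2 * j)) (ℓ : ℕ) :
    (laplacian σ R)^[j + ℓ] ((∑ k, X k ^ 2) ^ ℓ * p)
      = (∏ i ∈ range ℓ, (2 * (j + i) + 2) * (2 * (j + i) + Fintype.card σ)) •
          (laplacian σ R)^[j] p := by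
  induction ℓ with
  | zero => simp
  | succ ℓ ih =>
    have hpow : ((∑ k, X k ^ 2) ^ ℓ * p).IsHomogeneous (2 * (j + ℓ)) := by
      simpa [mul_add, add_comm] using (isHomogeneous_sum_X_sq.pow ℓ).mul hp
    rw [← add_assoc, pow_succ', mul_assoc, iterate_laplacian_sum_X_sq_mul hpow, ih,
      smul_smul, prod_range_succ, mul_comm]

end Laplacian

section Calculus

variable {𝕜 σ : Type*} [NontriviallyNormedField 𝕜] [Fintype σ]

theorem differentiable_eval (p : MvPolynomial σ 𝕜) : Differentiable 𝕜 (fun y => eval y p) := by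
  induction p using MvPolynomial.induction_on with
  | C a => simp
  | add p q hp hq => simp only [map_add]; exact hp.add hq
  | mul_X p n hp => simp only [map_mul, eval_X]; exact hp.mul (differentiable_apply n)

theorem fderiv_eval_apply (p : MvPolynomial σ 𝕜) (x v : σ → 𝕜) :
    fderiv 𝕜 (fun y => eval y p) x v = ∑ i, eval x (pderiv i p) * v i := by
  classical
  induction p using MvPolynomial.induction_on with
  | C a => simp
  | add p q hp hq =>
    simp only [map_add]
    rw [fderiv_fun_add (differentiable_eval p x) (differentiable_eval q x)]
    simp [hp, hq, add_mul, sum_add_distrib]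
  | mul_X p n hp =>
    simp only [map_mul, eval_X]
    rw [fderiv_fun_mul (differentiable_eval p x) (differentiable_apply n x)]
    simp [(hasFDerivAt_apply n x).fderiv, hp, pderiv_X, Pi.single_apply, add_mul, sum_add_distrib,
      mul_sum, apply_ite, mul_assoc]

theorem fderiv_eval_apply_single [DecidableEq σ] (p : MvPolynomial σ 𝕜) (x : σ → 𝕜) (i : σ) :
    fderiv 𝕜 (fun y => eval y p) x (Pi.single i 1) = eval x (pderiv i p) := by
  simp [fderiv_eval_apply, Pi.single_apply]

theorem semiconj_eval_laplacian [DecidableEq σ] {Δ : ((σ → 𝕜) → 𝕜) → (σ → 𝕜) → 𝕜}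
    (hΔ : ∀ f x, Δ f x
      = ∑ i, fderiv 𝕜 (fun y => fderiv 𝕜 f y (Pi.single i 1)) x (Pi.single i 1)) :
    Function.Semiconj (fun p x => eval x p) (laplacian σ 𝕜) Δ := by
  intro p
  funext x
  simp only [hΔ, fderiv_eval_apply_single, laplacian_apply, map_sum]

end Calculus

end MvPolynomial

open Nat in
theorem Real.prod_range_eq_mul_factorial_div_mul_Gamma_div (j ℓ : ℕ) {a : ℝ} (ha : 0 < a) :
    ∏ i ∈ range ℓ, ((2 * (j + i) + 2) * (2 * (j + i) + 2 * a))
      = 4 ^ ℓ * ((j + ℓ)! / j ! : ℝ) * (Real.Gamma (j + ℓ + a) / Real.Gamma (j + a)) := by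
  induction ℓ with
  | zero =>
    have : Real.Gamma (j + a) ≠ 0 := (Real.Gamma_pos_of_pos (by positivity)).ne'
    simp [this, Nat.factorial_ne_zero]
  | succ ℓ ih =>
    have hΓ : Real.Gamma (j + (ℓ + 1 : ℕ) + a) = (j + ℓ + a) * Real.Gamma (j + ℓ + a) := by
      rw [← Real.Gamma_add_one (by positivity)]
      push_cast
      ring_nf
    rw [prod_range_succ, ih, hΓ, ← add_assoc, Nat.factorial_succ]
    push_cast
    ring

/-- For a homogeneous polynomial `R` of degree `2j` on `ℝ^m` and the Euclidean Laplacian `Δ`,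
`Δ^{j+ℓ}[|x|^{2ℓ} R] = 4^ℓ (j+ℓ)!/j! ⬝ Γ(j+ℓ+m/2)/Γ(j+m/2) ⬝ Δ^j[R]`. -/
theorem laplacian_power_norm_mul (m : ℕ) (hm : 0 < m) (j ℓ : ℕ)
    (R : MvPolynomial (Fin m) ℝ)
    (hR : R ∈ MvPolynomial.homogeneousSubmodule (Fin m) ℝ (2 * j))
    (Δ : ((Fin m → ℝ) → ℝ) → ((Fin m → ℝ) → ℝ))
    (hΔ : ∀ f : (Fin m → ℝ) → ℝ, ∀ x : Fin m → ℝ,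
      Δ f x = ∑ i : Fin m,
        fderiv ℝ (fun y => fderiv ℝ f y (Pi.single i 1)) x (Pi.single i 1)) :
    ∀ x : Fin m → ℝ,
      Δ^[j + ℓ] (fun x : Fin m → ℝ => (∑ i : Fin m, x i ^ 2) ^ ℓ * MvPolynomial.eval x R) x
        = 4 ^ ℓ * ((Nat.factorial (j + ℓ) : ℝ) / (Nat.factorial j : ℝ))
            * (Real.Gamma ((j : ℝ) + (ℓ : ℝ) + (m : ℝ) / 2)
              / Real.Gamma ((j : ℝ) + (m : ℝ) / 2))
            * Δ^[j] (fun x : Fin m → ℝ => MvPolynomial.eval x R) x := by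
  intro x
  have hsemi := MvPolynomial.semiconj_eval_laplacian hΔ
  have hconst : ((∏ i ∈ range ℓ, (2 * (j + i) + 2) * (2 * (j + i) + Fintype.card (Fin m)) : ℕ) : ℝ)
      = 4 ^ ℓ * ((Nat.factorial (j + ℓ) : ℝ) / (Nat.factorial j : ℝ))
          * (Real.Gamma ((j : ℝ) + (ℓ : ℝ) + (m : ℝ) / 2) / Real.Gamma ((j : ℝ) + (m : ℝ) / 2)) := by
    rw [← Real.prod_range_eq_mul_factorial_div_mul_Gamma_div j ℓ
      (div_pos (Nat.cast_pos.mpr hm) two_pos)]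
    push_cast [Fintype.card_fin]
    exact prod_congr rfl fun i _ => by ring
  have hpoly : (fun x : Fin m → ℝ => (∑ i : Fin m, x i ^ 2) ^ ℓ * MvPolynomial.eval x R)
      = fun x => MvPolynomial.eval x ((∑ i, MvPolynomial.X i ^ 2) ^ ℓ * R) := by
    funext y
    simp
  rw [hpoly, ← hsemi.iterate_right, ← hsemi.iterate_right,
    MvPolynomial.iterate_laplacian_sum_X_sq_pow_mul hR]
  dsimp only
  rw [map_nsmul, nsmul_eq_mul, hconst]
end
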